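/- arXiv:2203.02454 — 2 statements merged into one kernel-verified Lean document; each statement's English description precedes it below -/
import Mathlib

section
/- Let f₁, f₂, f₃, f₄ : ℝ³ → [0,∞) belong to the class S. Then for every y ∈ ℝ³ the double integral S(y) := ∬_{ℝ³×ℝ³} f₁(u) f₂(v) f₃(u+y) f₄(v+y) / |u−v| du dv is finite, and the function y ↦ S(y) itself belongs to the class S. -/
open MeasureTheory ENNReal

noncomputable section

/-- The class `S`: measurable functions `f : ℝ³ → ℝ` that belong to
`L^p(ℝ³, (1+|x|ⁿ) dx)` for every `1 ≤ p ≤ ∞` and every integer `n ≥ 0`. -/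
def classS (f : EuclideanSpace ℝ (Fin 3) → ℝ) : Prop :=
  ∀ (p : ℝ≥0∞) (n : ℕ), 1 ≤ p →
    MemLp f p (volume.withDensity fun x => ENNReal.ofReal (1 + ‖x‖ ^ n))

namespace ClassSAux

open Metric Set


abbrev E3 := EuclideanSpace ℝ (Fin 3)

/-! ### Interpolation -/

lemma memLp_of_one_top {α : Type*} [MeasurableSpace α] {μ : Measure α} {f : α → ℝ}
    (h1 : MemLp f 1 μ) (ht : MemLp f ∞ μ) {p : ℝ≥0∞} (hp : 1 ≤ p) : MemLp f p μ := by
  rcases eq_or_ne p ∞ with rfl | hptop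
  · exact ht
  have hp0 : p ≠ 0 := by
    intro h; rw [h] at hp; exact (not_le.2 zero_lt_one) hp
  refine ⟨h1.1, ?_⟩
  rw [eLpNorm_eq_lintegral_rpow_enorm_toReal hp0 hptop]
  set C := eLpNormEssSup f μ with hC
  have hCt : C ≠ ∞ := by
    have := ht.2
    rw [eLpNorm_exponent_top] at this
    exact this.ne
  have ht1 : (1:ℝ) ≤ p.toReal := by
    rw [← ENNReal.toReal_one]
    exact ENNReal.toReal_mono hptop hp
  have hC1 : C ^ (p.toReal - 1) ≠ ∞ :=
    (ENNReal.rpow_lt_top_of_nonneg (by linarith) hCt).ne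
  have key : (∫⁻ x, (‖f x‖₊ : ℝ≥0∞) ^ p.toReal ∂μ)
      ≤ C ^ (p.toReal - 1) * ∫⁻ x, (‖f x‖₊ : ℝ≥0∞) ∂μ := by
    rw [← lintegral_const_mul' _ _ hC1]
    refine lintegral_mono_ae ?_
    filter_upwards [enorm_ae_le_eLpNormEssSup f μ] with x hx
    rcases eq_or_ne ((‖f x‖₊ : ℝ≥0∞)) 0 with h0 | h0
    · rw [h0, ENNReal.zero_rpow_of_pos (by linarith)]
      exact zero_le
    · have hsplit : p.toReal = (p.toReal - 1) + 1 := by ring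
      calc (‖f x‖₊ : ℝ≥0∞) ^ p.toReal
          = (‖f x‖₊ : ℝ≥0∞) ^ (p.toReal - 1) * (‖f x‖₊ : ℝ≥0∞) ^ (1:ℝ) := by
            conv_lhs => rw [hsplit]
            rw [ENNReal.rpow_add _ _ h0 coe_ne_top]
        _ = (‖f x‖₊ : ℝ≥0∞) ^ (p.toReal - 1) * (‖f x‖₊ : ℝ≥0∞) := by
            rw [ENNReal.rpow_one]
        _ ≤ C ^ (p.toReal - 1) * (‖f x‖₊ : ℝ≥0∞) :=
            mul_le_mul_left (ENNReal.rpow_le_rpow hx (by linarith)) _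
  have hfin : (∫⁻ x, (‖f x‖₊ : ℝ≥0∞) ∂μ) < ∞ := by
    have := h1.2
    rwa [eLpNorm_one_eq_lintegral_enorm] at this
  refine ENNReal.rpow_lt_top_of_nonneg (by positivity) ?_
  exact ((key.trans_lt (ENNReal.mul_lt_top hC1.lt_top hfin))).ne

/-! ### The kernel -/

def K : E3 → ℝ≥0∞ := fun x => ENNReal.ofReal ‖x‖⁻¹

@[fun_prop]
lemma measurable_K : Measurable K :=
  (measurable_norm.inv).ennreal_ofReal

def K1 : E3 → ℝ≥0∞ := (closedBall (0:E3) 1).indicator K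

@[fun_prop]
lemma measurable_K1 : Measurable K1 :=
  measurable_K.indicator measurableSet_closedBall

lemma K_le (x : E3) : K x ≤ K1 x + 1 := by
  by_cases hx : x ∈ closedBall (0:E3) 1
  · rw [K1, indicator_of_mem hx]; exact le_self_add
  · rw [K1, indicator_of_notMem hx, zero_add]
    simp only [mem_closedBall, dist_zero_right, not_le] at hx
    rw [K]
    refine ENNReal.ofReal_le_one.2 ?_
    exact inv_le_one_of_one_le₀ hx.le

lemma finrank_E3 : Module.finrank ℝ E3 = 3 := by
  simp [finrank_euclideanSpace]

/-- Dyadic shells. -/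
def A (j : ℕ) : Set E3 := {x | (2⁻¹:ℝ)^(j+1) < ‖x‖ ∧ ‖x‖ ≤ (2⁻¹:ℝ)^j}

lemma measurableSet_A (j : ℕ) : MeasurableSet (A j) :=
  (measurableSet_lt measurable_const measurable_norm).inter
    (measurableSet_le measurable_norm measurable_const)

lemma ball_subset_cover : closedBall (0:E3) 1 ⊆ {0} ∪ ⋃ j, A j := by
  intro x hx
  rcases eq_or_ne x 0 with rfl | hx0
  · exact Or.inl rfl
  refine Or.inr ?_
  have ht0 : 0 < ‖x‖ := norm_pos_iff.2 hx0
  have ht1 : ‖x‖ ≤ 1 := by simpa [dist_zero_right] using hx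
  have hex : ∃ n : ℕ, (2⁻¹:ℝ)^n < ‖x‖ := exists_pow_lt_of_lt_one ht0 (by norm_num)
  classical
  set n := Nat.find hex with hn
  have hspec : (2⁻¹:ℝ)^n < ‖x‖ := Nat.find_spec hex
  have hn0 : n ≠ 0 := by
    intro h
    rw [h] at hspec
    simp at hspec
    linarith
  refine mem_iUnion.2 ⟨n - 1, ?_, ?_⟩
  · rwa [Nat.sub_add_cancel (Nat.one_le_iff_ne_zero.2 hn0)]
  · by_contra h
    push_neg at h
    exact Nat.find_min hex (Nat.pred_lt hn0) h

lemma kappa_lt_top : ∫⁻ x, K1 x < ∞ := by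
  have hV : volume (ball (0:E3) 1) < ∞ := measure_ball_lt_top
  set V := volume (ball (0:E3) 1) with hVdef
  rw [K1, lintegral_indicator measurableSet_closedBall]
  calc ∫⁻ x in closedBall (0:E3) 1, K x
      ≤ ∫⁻ x in ({0} ∪ ⋃ j, A j : Set E3), K x :=
        lintegral_mono_set ball_subset_cover
    _ ≤ (∫⁻ x in ({0}:Set E3), K x) + ∫⁻ x in (⋃ j, A j), K x :=
        lintegral_union_le _ _ _
    _ ≤ 0 + ∑' j, ∫⁻ x in A j, K x := by
        gcongr
        · refine le_of_eq (setLIntegral_measure_zero _ _ ?_)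
          simp
        · exact lintegral_iUnion_le _ _
    _ ≤ ∑' j : ℕ, (2 * V * 2⁻¹ ^ j : ℝ≥0∞) := by
        rw [zero_add]
        refine ENNReal.tsum_le_tsum fun j => ?_
        calc ∫⁻ x in A j, K x
            ≤ ∫⁻ _x in A j, ((2:ℝ≥0∞) ^ (j+1)) := by
              refine setLIntegral_mono' (measurableSet_A j) fun x hx => ?_
              rw [K]
              have h1 : (0:ℝ) < (2⁻¹:ℝ)^(j+1) := by positivity
              have h2 : ‖x‖⁻¹ ≤ ((2⁻¹:ℝ)^(j+1))⁻¹ := by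
                exact inv_anti₀ h1 hx.1.le
              refine le_trans (ENNReal.ofReal_le_ofReal h2) ?_
              rw [← inv_pow, inv_inv]
              rw [ENNReal.ofReal_pow (by norm_num)]
              norm_num
          _ = (2:ℝ≥0∞) ^ (j+1) * volume (A j) := setLIntegral_const _ _
          _ ≤ (2:ℝ≥0∞) ^ (j+1) * volume (closedBall (0:E3) ((2⁻¹:ℝ)^j)) := by
              gcongr
              exact fun x hx => by simpa [dist_zero_right] using hx.2
          _ = (2:ℝ≥0∞) ^ (j+1) *
                (ENNReal.ofReal (((2⁻¹:ℝ)^j) ^ Module.finrank ℝ E3) * V) := by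
              rw [Measure.addHaar_closedBall _ _ (by positivity)]
          _ ≤ 2 * V * 2⁻¹ ^ j := by
              rw [finrank_E3]
              have hof : ENNReal.ofReal (((2⁻¹:ℝ)^j) ^ 3)
                  = ((2:ℝ≥0∞)⁻¹) ^ (3*j) := by
                rw [← pow_mul, ENNReal.ofReal_pow (by norm_num), mul_comm]
                congr 1
                rw [ENNReal.ofReal_inv_of_pos (by norm_num)]
                norm_num
              rw [hof]
              have hrw : (2:ℝ≥0∞) ^ (j+1) * (2⁻¹ ^ (3*j) * V)
                  = 2 * V * (2 ^ j * (2⁻¹ ^ j * 2⁻¹ ^ j * 2⁻¹ ^ j)) := by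
                rw [pow_succ, show 3*j = j + (j + j) by ring, pow_add, pow_add]
                ring
              rw [hrw]
              have hcancel : (2:ℝ≥0∞) ^ j * 2⁻¹ ^ j = 1 := by
                rw [← mul_pow, ENNReal.mul_inv_cancel (by norm_num) (by norm_num), one_pow]
              calc 2 * V * ((2:ℝ≥0∞) ^ j * (2⁻¹ ^ j * 2⁻¹ ^ j * 2⁻¹ ^ j))
                  = 2 * V * ((2 ^ j * 2⁻¹ ^ j) * (2⁻¹ ^ j * 2⁻¹ ^ j)) := by ring
                _ = 2 * V * (2⁻¹ ^ j * 2⁻¹ ^ j) := by rw [hcancel, one_mul]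
                _ ≤ 2 * V * (1 * 2⁻¹ ^ j) := by
                    gcongr
                    exact pow_le_one' (by norm_num) j
                _ = 2 * V * 2⁻¹ ^ j := by rw [one_mul]
    _ = 2 * V * ∑' j : ℕ, (2⁻¹:ℝ≥0∞) ^ j := ENNReal.tsum_mul_left
    _ < ∞ := by
        rw [ENNReal.tsum_geometric]
        refine ENNReal.mul_lt_top (ENNReal.mul_lt_top (by norm_num) hV) ?_
        rw [ENNReal.inv_lt_top]
        have h2 : (2⁻¹:ℝ≥0∞) < 1 := by norm_num
        exact tsub_pos_of_lt h2

/-! ### Core estimate -/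

lemma core (G H : E3 → ℝ≥0∞) (hG : Measurable G) (hH : Measurable H)
    (CH : ℝ≥0∞) (hbH : ∀ᵐ v ∂(volume : Measure E3), H v ≤ CH) :
    ∫⁻ q : E3 × E3, G q.1 * H q.2 * K (q.1 - q.2) ≤
      (∫⁻ u, G u) * (CH * (∫⁻ x, K1 x) + ∫⁻ v, H v) := by
  have hmeas : Measurable fun q : E3 × E3 =>
      G q.1 * (H q.2 * K1 (q.1 - q.2) + H q.2) :=
    (hG.comp measurable_fst).mul
      (((hH.comp measurable_snd).mul
        (measurable_K1.comp (measurable_fst.sub measurable_snd))).add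
        (hH.comp measurable_snd))
  calc ∫⁻ q : E3 × E3, G q.1 * H q.2 * K (q.1 - q.2)
      ≤ ∫⁻ q : E3 × E3, G q.1 * (H q.2 * K1 (q.1 - q.2) + H q.2) := by
        refine lintegral_mono fun q => ?_
        calc G q.1 * H q.2 * K (q.1 - q.2)
            ≤ G q.1 * H q.2 * (K1 (q.1 - q.2) + 1) := by
              gcongr; exact K_le _
          _ = G q.1 * (H q.2 * K1 (q.1 - q.2) + H q.2) := by ring
    _ = ∫⁻ u, ∫⁻ v, G u * (H v * K1 (u - v) + H v) := by
        rw [Measure.volume_eq_prod]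
        exact lintegral_prod _ hmeas.aemeasurable
    _ = ∫⁻ u, G u * ∫⁻ v, (H v * K1 (u - v) + H v) := by
        refine lintegral_congr fun u => ?_
        exact lintegral_const_mul _ ((hH.mul
          (measurable_K1.comp (measurable_const.sub measurable_id))).add hH)
    _ ≤ ∫⁻ u, G u * (CH * (∫⁻ x, K1 x) + ∫⁻ v, H v) := by
        refine lintegral_mono fun u => ?_
        gcongr
        rw [lintegral_add_right _ hH]
        gcongr
        calc ∫⁻ v, H v * K1 (u - v)
            ≤ ∫⁻ v, CH * K1 (u - v) := by
              refine lintegral_mono_ae ?_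
              filter_upwards [hbH] with v hv
              exact mul_le_mul_left hv _
          _ = CH * ∫⁻ v, K1 (u - v) :=
              lintegral_const_mul _ (measurable_K1.comp (measurable_const.sub measurable_id))
          _ = CH * ∫⁻ x, K1 x := by
              congr 1
              exact (Measure.measurePreserving_sub_left volume u).lintegral_comp measurable_K1
    _ = (∫⁻ u, G u) * (CH * (∫⁻ x, K1 x) + ∫⁻ v, H v) :=
        lintegral_mul_const _ hG

/-! ### Polynomial weights -/

def W (n : ℕ) : E3 → ℝ≥0∞ := fun x => ENNReal.ofReal (1 + ‖x‖ ^ n)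

@[fun_prop]
lemma measurable_W (n : ℕ) : Measurable (W n) :=
  (measurable_const.add (measurable_norm.pow_const n)).ennreal_ofReal

lemma one_le_W (n : ℕ) (x : E3) : 1 ≤ W n x := by
  rw [W, show (1:ℝ≥0∞) = ENNReal.ofReal 1 by simp]
  exact ENNReal.ofReal_le_ofReal (le_add_of_nonneg_right (by positivity))

lemma W_split (n : ℕ) (y u : E3) :
    W n y ≤ ENNReal.ofReal ((2:ℝ)^n) * (W n (u + y) * W n u) := by
  have hy : ‖y‖ ≤ ‖u + y‖ + ‖u‖ := by
    have h := norm_sub_le (u + y) u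
    simpa [add_sub_cancel_left] using h
  have hyn : ‖y‖ ^ n ≤ (‖u + y‖ + ‖u‖) ^ n :=
    pow_le_pow_left₀ (norm_nonneg _) hy n
  have h2 : (‖u + y‖ + ‖u‖) ^ n ≤ 2 ^ n * (‖u + y‖ ^ n + ‖u‖ ^ n) := by
    calc (‖u + y‖ + ‖u‖) ^ n ≤ 2 ^ (n - 1) * (‖u + y‖ ^ n + ‖u‖ ^ n) :=
          add_pow_le (norm_nonneg _) (norm_nonneg _) n
      _ ≤ 2 ^ n * (‖u + y‖ ^ n + ‖u‖ ^ n) := by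
          have hp : (2:ℝ) ^ (n-1) ≤ 2 ^ n := pow_le_pow_right₀ one_le_two (Nat.sub_le n 1)
          have hq : (0:ℝ) ≤ ‖u + y‖ ^ n + ‖u‖ ^ n := by positivity
          exact mul_le_mul_of_nonneg_right hp hq
  have hkey : 1 + ‖y‖ ^ n ≤ (2:ℝ) ^ n * ((1 + ‖u + y‖ ^ n) * (1 + ‖u‖ ^ n)) := by
    have hA : (0:ℝ) ≤ ‖u + y‖ ^ n := by positivity
    have hB : (0:ℝ) ≤ ‖u‖ ^ n := by positivity
    have h1 : (1:ℝ) ≤ 2 ^ n := one_le_pow₀ (by norm_num)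
    nlinarith [mul_nonneg hA hB, hyn.trans h2]
  calc W n y ≤ ENNReal.ofReal ((2:ℝ) ^ n * ((1 + ‖u + y‖ ^ n) * (1 + ‖u‖ ^ n))) :=
        ENNReal.ofReal_le_ofReal hkey
    _ = ENNReal.ofReal ((2:ℝ)^n) * (W n (u + y) * W n u) := by
        rw [ENNReal.ofReal_mul (by positivity), ENNReal.ofReal_mul (by positivity)]
        rfl

/-! ### The two integral bounds -/

lemma bound_fixed_y (F₁ F₂ F₃ F₄ : E3 → ℝ≥0∞)
    (h1 : Measurable F₁) (h2 : Measurable F₂) (h3 : Measurable F₃) (h4 : Measurable F₄)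
    (C₂ C₃ C₄ : ℝ≥0∞)
    (hb2 : ∀ᵐ x ∂(volume : Measure E3), F₂ x ≤ C₂)
    (hb3 : ∀ᵐ x ∂(volume : Measure E3), F₃ x ≤ C₃)
    (hb4 : ∀ᵐ x ∂(volume : Measure E3), F₄ x ≤ C₄) (y : E3) :
    ∫⁻ q : E3 × E3, F₁ q.1 * F₂ q.2 * F₃ (q.1 + y) * F₄ (q.2 + y) * K (q.1 - q.2) ≤
      (C₃ * ∫⁻ x, F₁ x) * (C₂ * C₄ * (∫⁻ x, K1 x) + C₄ * ∫⁻ x, F₂ x) := by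
  have hb3y : ∀ᵐ u ∂(volume : Measure E3), F₃ (u + y) ≤ C₃ :=
    (measurePreserving_add_right volume y).quasiMeasurePreserving.ae hb3
  have hb4y : ∀ᵐ v ∂(volume : Measure E3), F₄ (v + y) ≤ C₄ :=
    (measurePreserving_add_right volume y).quasiMeasurePreserving.ae hb4
  have hGm : Measurable fun u => F₁ u * F₃ (u + y) := by fun_prop
  have hHm : Measurable fun v => F₂ v * F₄ (v + y) := by fun_prop
  have hcore := core _ _ hGm hHm (C₂ * C₄)
    (by filter_upwards [hb2, hb4y] with v a b; exact mul_le_mul' a b)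
  calc ∫⁻ q : E3 × E3, F₁ q.1 * F₂ q.2 * F₃ (q.1 + y) * F₄ (q.2 + y) * K (q.1 - q.2)
      = ∫⁻ q : E3 × E3, (F₁ q.1 * F₃ (q.1 + y)) * (F₂ q.2 * F₄ (q.2 + y)) * K (q.1 - q.2) :=
        lintegral_congr fun q => by ring
    _ ≤ (∫⁻ u, F₁ u * F₃ (u + y)) * (C₂ * C₄ * (∫⁻ x, K1 x) + ∫⁻ v, F₂ v * F₄ (v + y)) := hcore
    _ ≤ (C₃ * ∫⁻ x, F₁ x) * (C₂ * C₄ * (∫⁻ x, K1 x) + C₄ * ∫⁻ x, F₂ x) := by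
        have e1 : ∫⁻ u, F₁ u * F₃ (u + y) ≤ C₃ * ∫⁻ x, F₁ x := by
          calc ∫⁻ u, F₁ u * F₃ (u + y) ≤ ∫⁻ u, C₃ * F₁ u := by
                refine lintegral_mono_ae ?_
                filter_upwards [hb3y] with u hu
                rw [mul_comm C₃]
                exact mul_le_mul_right hu _
            _ = C₃ * ∫⁻ x, F₁ x := lintegral_const_mul _ h1
        have e2 : ∫⁻ v, F₂ v * F₄ (v + y) ≤ C₄ * ∫⁻ x, F₂ x := by
          calc ∫⁻ v, F₂ v * F₄ (v + y) ≤ ∫⁻ v, C₄ * F₂ v := by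
                refine lintegral_mono_ae ?_
                filter_upwards [hb4y] with v hv
                rw [mul_comm C₄]
                exact mul_le_mul_right hv _
            _ = C₄ * ∫⁻ x, F₂ x := lintegral_const_mul _ h2
        gcongr

lemma bound_weighted (n : ℕ) (F₁ F₂ F₃ F₄ : E3 → ℝ≥0∞)
    (h1 : Measurable F₁) (h2 : Measurable F₂) (h3 : Measurable F₃) (h4 : Measurable F₄)
    (C₂ C₄ : ℝ≥0∞)
    (hb2 : ∀ᵐ x ∂(volume : Measure E3), F₂ x ≤ C₂)
    (hb4 : ∀ᵐ x ∂(volume : Measure E3), F₄ x ≤ C₄) :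
    ∫⁻ y, W n y * ∫⁻ q : E3 × E3,
        F₁ q.1 * F₂ q.2 * F₃ (q.1 + y) * F₄ (q.2 + y) * K (q.1 - q.2) ≤
      ENNReal.ofReal ((2:ℝ)^n) *
        ((∫⁻ x, W n x * F₁ x) * (C₂ * (∫⁻ x, K1 x) + ∫⁻ x, F₂ x)) *
        ((∫⁻ x, W n x * F₃ x) * C₄) := by
  have hΦm : ∀ y : E3, Measurable fun q : E3 × E3 =>
      F₁ q.1 * F₂ q.2 * F₃ (q.1 + y) * F₄ (q.2 + y) * K (q.1 - q.2) := by
    intro y; fun_prop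
  have hTm : ∀ q : E3 × E3, Measurable fun y : E3 =>
      (W n (q.1 + y) * F₃ (q.1 + y)) * F₄ (q.2 + y) := by
    intro q; fun_prop
  have hΨm : Measurable fun z : E3 × (E3 × E3) =>
      (ENNReal.ofReal ((2:ℝ)^n) * ((W n z.2.1 * F₁ z.2.1) * F₂ z.2.2 * K (z.2.1 - z.2.2))) *
        ((W n (z.2.1 + z.1) * F₃ (z.2.1 + z.1)) * F₄ (z.2.2 + z.1)) := by
    fun_prop
  calc ∫⁻ y, W n y * ∫⁻ q : E3 × E3,
        F₁ q.1 * F₂ q.2 * F₃ (q.1 + y) * F₄ (q.2 + y) * K (q.1 - q.2)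
      = ∫⁻ y, ∫⁻ q : E3 × E3,
          W n y * (F₁ q.1 * F₂ q.2 * F₃ (q.1 + y) * F₄ (q.2 + y) * K (q.1 - q.2)) :=
        lintegral_congr fun y => (lintegral_const_mul _ (hΦm y)).symm
    _ ≤ ∫⁻ y, ∫⁻ q : E3 × E3,
          (ENNReal.ofReal ((2:ℝ)^n) * ((W n q.1 * F₁ q.1) * F₂ q.2 * K (q.1 - q.2))) *
            ((W n (q.1 + y) * F₃ (q.1 + y)) * F₄ (q.2 + y)) := by
        refine lintegral_mono fun y => lintegral_mono fun q => ?_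
        calc W n y * (F₁ q.1 * F₂ q.2 * F₃ (q.1 + y) * F₄ (q.2 + y) * K (q.1 - q.2))
            ≤ (ENNReal.ofReal ((2:ℝ)^n) * (W n (q.1 + y) * W n q.1)) *
                (F₁ q.1 * F₂ q.2 * F₃ (q.1 + y) * F₄ (q.2 + y) * K (q.1 - q.2)) :=
              mul_le_mul_left (W_split n y q.1) _
          _ = (ENNReal.ofReal ((2:ℝ)^n) * ((W n q.1 * F₁ q.1) * F₂ q.2 * K (q.1 - q.2))) *
                ((W n (q.1 + y) * F₃ (q.1 + y)) * F₄ (q.2 + y)) := by ring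
    _ = ∫⁻ q : E3 × E3, ∫⁻ y,
          (ENNReal.ofReal ((2:ℝ)^n) * ((W n q.1 * F₁ q.1) * F₂ q.2 * K (q.1 - q.2))) *
            ((W n (q.1 + y) * F₃ (q.1 + y)) * F₄ (q.2 + y)) :=
        lintegral_lintegral_swap hΨm.aemeasurable
    _ ≤ ∫⁻ q : E3 × E3,
          (ENNReal.ofReal ((2:ℝ)^n) * ((W n q.1 * F₁ q.1) * F₂ q.2 * K (q.1 - q.2))) *
            ((∫⁻ x, W n x * F₃ x) * C₄) := by
        refine lintegral_mono fun q => ?_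
        rw [lintegral_const_mul _ (hTm q)]
        gcongr
        calc ∫⁻ y, (W n (q.1 + y) * F₃ (q.1 + y)) * F₄ (q.2 + y)
            ≤ ∫⁻ y, (W n (q.1 + y) * F₃ (q.1 + y)) * C₄ := by
              refine lintegral_mono_ae ?_
              have hb4y : ∀ᵐ y ∂(volume : Measure E3), F₄ (q.2 + y) ≤ C₄ :=
                (measurePreserving_add_left volume q.2).quasiMeasurePreserving.ae hb4
              filter_upwards [hb4y] with y hy
              exact mul_le_mul_right hy _
          _ = (∫⁻ y, W n (q.1 + y) * F₃ (q.1 + y)) * C₄ := by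
              exact lintegral_mul_const _ (by fun_prop)
          _ = (∫⁻ x, W n x * F₃ x) * C₄ := by
              congr 1
              exact (measurePreserving_add_left volume q.1).lintegral_comp
                ((measurable_W n).mul h3)
    _ = (∫⁻ q : E3 × E3,
          ENNReal.ofReal ((2:ℝ)^n) * ((W n q.1 * F₁ q.1) * F₂ q.2 * K (q.1 - q.2))) *
            ((∫⁻ x, W n x * F₃ x) * C₄) := lintegral_mul_const _ (by fun_prop)
    _ = (ENNReal.ofReal ((2:ℝ)^n) *
          ∫⁻ q : E3 × E3, (W n q.1 * F₁ q.1) * F₂ q.2 * K (q.1 - q.2)) *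
            ((∫⁻ x, W n x * F₃ x) * C₄) := by
        rw [lintegral_const_mul _ (by fun_prop :
          Measurable fun q : E3 × E3 => (W n q.1 * F₁ q.1) * F₂ q.2 * K (q.1 - q.2))]
    _ ≤ ENNReal.ofReal ((2:ℝ)^n) *
          ((∫⁻ x, W n x * F₁ x) * (C₂ * (∫⁻ x, K1 x) + ∫⁻ x, F₂ x)) *
          ((∫⁻ x, W n x * F₃ x) * C₄) := by
        rw [mul_assoc (ENNReal.ofReal ((2:ℝ)^n))]
        rw [← mul_assoc]
        gcongr
        exact core _ _ (by fun_prop) h2 C₂ hb2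

/-! ### Consequences of membership in `classS` -/

lemma vol_ac (n : ℕ) : (volume : Measure E3) ≪ volume.withDensity (W n) := by
  refine Measure.absolutelyContinuous_of_le ?_
  rw [Measure.le_iff]
  intro s hs
  rw [withDensity_apply _ hs]
  calc volume s = ∫⁻ _x in s, 1 := (setLIntegral_one s).symm
    _ ≤ ∫⁻ x in s, W n x := lintegral_mono fun x => one_le_W n x

lemma classS_facts {f : E3 → ℝ} (hm : Measurable f) (hnn : ∀ x, 0 ≤ f x) (hS : classS f) :
    (∃ C : ℝ≥0∞, C ≠ ∞ ∧ ∀ᵐ x ∂(volume : Measure E3), ENNReal.ofReal (f x) ≤ C) ∧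
    ∀ n : ℕ, (∫⁻ x, W n x * ENNReal.ofReal (f x) ∂(volume : Measure E3)) < ∞ := by
  constructor
  · have h' : MemLp f ⊤ (volume.withDensity (W 0)) := hS ∞ 0 le_top
    refine ⟨eLpNormEssSup f (volume.withDensity (W 0)), ?_, ?_⟩
    · have h2 := h'.2
      rw [eLpNorm_exponent_top] at h2
      exact h2.ne
    · have hae := enorm_ae_le_eLpNormEssSup f (volume.withDensity (W 0))
      filter_upwards [hae.filter_mono (vol_ac 0).ae_le] with x hx
      rw [← Real.enorm_eq_ofReal (hnn x)]
      exact hx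
  · intro n
    have h' : MemLp f 1 (volume.withDensity (W n)) := hS 1 n le_rfl
    have h2 := h'.2
    rw [eLpNorm_one_eq_lintegral_enorm,
      lintegral_withDensity_eq_lintegral_mul _ (measurable_W n)
        hm.enorm] at h2
    refine lt_of_le_of_lt (le_of_eq ?_) h2
    refine lintegral_congr fun x => ?_
    simp only [Pi.mul_apply]
    rw [← Real.enorm_eq_ofReal (hnn x)]

/-! ### Main lemma, for measurable nonnegative representatives -/

lemma main (f₁ f₂ f₃ f₄ : E3 → ℝ)
    (hm₁ : Measurable f₁) (hm₂ : Measurable f₂) (hm₃ : Measurable f₃) (hm₄ : Measurable f₄)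
    (hnn₁ : ∀ x, 0 ≤ f₁ x) (hnn₂ : ∀ x, 0 ≤ f₂ x)
    (hnn₃ : ∀ x, 0 ≤ f₃ x) (hnn₄ : ∀ x, 0 ≤ f₄ x)
    (hS₁ : classS f₁) (hS₂ : classS f₂) (hS₃ : classS f₃) (hS₄ : classS f₄) :
    (∀ y : E3,
      Integrable (fun q : E3 × E3 =>
        f₁ q.1 * f₂ q.2 * f₃ (q.1 + y) * f₄ (q.2 + y) / ‖q.1 - q.2‖) volume) ∧
    classS (fun y =>
      ∫ q : E3 × E3, f₁ q.1 * f₂ q.2 * f₃ (q.1 + y) * f₄ (q.2 + y) / ‖q.1 - q.2‖) := by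
  obtain ⟨-, hI₁⟩ := classS_facts hm₁ hnn₁ hS₁
  obtain ⟨⟨C₂, hC₂, hb₂⟩, hI₂⟩ := classS_facts hm₂ hnn₂ hS₂
  obtain ⟨⟨C₃, hC₃, hb₃⟩, hI₃⟩ := classS_facts hm₃ hnn₃ hS₃
  obtain ⟨⟨C₄, hC₄, hb₄⟩, -⟩ := classS_facts hm₄ hnn₄ hS₄
  have hF₁ : Measurable fun x => ENNReal.ofReal (f₁ x) := hm₁.ennreal_ofReal
  have hF₂ : Measurable fun x => ENNReal.ofReal (f₂ x) := hm₂.ennreal_ofReal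
  have hF₃ : Measurable fun x => ENNReal.ofReal (f₃ x) := hm₃.ennreal_ofReal
  have hF₄ : Measurable fun x => ENNReal.ofReal (f₄ x) := hm₄.ennreal_ofReal
  have hIp₁ : (∫⁻ x, ENNReal.ofReal (f₁ x) ∂(volume : Measure E3)) < ∞ := by
    refine lt_of_le_of_lt (lintegral_mono fun x => ?_) (hI₁ 0)
    calc ENNReal.ofReal (f₁ x) = 1 * ENNReal.ofReal (f₁ x) := (one_mul _).symm
      _ ≤ W 0 x * ENNReal.ofReal (f₁ x) := mul_le_mul_left (one_le_W 0 x) _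
  have hIp₂ : (∫⁻ x, ENNReal.ofReal (f₂ x) ∂(volume : Measure E3)) < ∞ := by
    refine lt_of_le_of_lt (lintegral_mono fun x => ?_) (hI₂ 0)
    calc ENNReal.ofReal (f₂ x) = 1 * ENNReal.ofReal (f₂ x) := (one_mul _).symm
      _ ≤ W 0 x * ENNReal.ofReal (f₂ x) := mul_le_mul_left (one_le_W 0 x) _
  have hRnn : ∀ (y : E3) (q : E3 × E3),
      0 ≤ f₁ q.1 * f₂ q.2 * f₃ (q.1 + y) * f₄ (q.2 + y) / ‖q.1 - q.2‖ := fun y q =>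
    div_nonneg
      (mul_nonneg (mul_nonneg (mul_nonneg (hnn₁ _) (hnn₂ _)) (hnn₃ _)) (hnn₄ _))
      (norm_nonneg _)
  have hofReal : ∀ (y : E3) (q : E3 × E3),
      ENNReal.ofReal (f₁ q.1 * f₂ q.2 * f₃ (q.1 + y) * f₄ (q.2 + y) / ‖q.1 - q.2‖)
        = ENNReal.ofReal (f₁ q.1) * ENNReal.ofReal (f₂ q.2) *
            ENNReal.ofReal (f₃ (q.1 + y)) * ENNReal.ofReal (f₄ (q.2 + y)) *
            K (q.1 - q.2) := by
    intro y q
    rw [div_eq_mul_inv,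
      ENNReal.ofReal_mul
        (mul_nonneg (mul_nonneg (mul_nonneg (hnn₁ _) (hnn₂ _)) (hnn₃ _)) (hnn₄ _)),
      ENNReal.ofReal_mul (mul_nonneg (mul_nonneg (hnn₁ _) (hnn₂ _)) (hnn₃ _)),
      ENNReal.ofReal_mul (mul_nonneg (hnn₁ _) (hnn₂ _)),
      ENNReal.ofReal_mul (hnn₁ _)]
    rfl
  set M : ℝ≥0∞ := (C₃ * ∫⁻ x, ENNReal.ofReal (f₁ x)) *
      (C₂ * C₄ * (∫⁻ x, K1 x) + C₄ * ∫⁻ x, ENNReal.ofReal (f₂ x)) with hMdef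
  have hM : M ≠ ∞ := by
    refine ENNReal.mul_ne_top (ENNReal.mul_ne_top hC₃ hIp₁.ne) ?_
    refine ENNReal.add_ne_top.2 ⟨?_, ENNReal.mul_ne_top hC₄ hIp₂.ne⟩
    exact ENNReal.mul_ne_top (ENNReal.mul_ne_top hC₂ hC₄) kappa_lt_top.ne
  have hbound : ∀ y : E3,
      (∫⁻ q : E3 × E3, ENNReal.ofReal (f₁ q.1) * ENNReal.ofReal (f₂ q.2) *
          ENNReal.ofReal (f₃ (q.1 + y)) * ENNReal.ofReal (f₄ (q.2 + y)) *
          K (q.1 - q.2)) ≤ M := fun y =>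
    bound_fixed_y _ _ _ _ hF₁ hF₂ hF₃ hF₄ C₂ C₃ C₄ hb₂ hb₃ hb₄ y
  have hRmeas : ∀ y : E3, Measurable fun q : E3 × E3 =>
      f₁ q.1 * f₂ q.2 * f₃ (q.1 + y) * f₄ (q.2 + y) / ‖q.1 - q.2‖ := by
    intro y; fun_prop
  have hint : ∀ y : E3,
      Integrable (fun q : E3 × E3 =>
        f₁ q.1 * f₂ q.2 * f₃ (q.1 + y) * f₄ (q.2 + y) / ‖q.1 - q.2‖) volume := by
    intro y
    refine ⟨(hRmeas y).aestronglyMeasurable, ?_⟩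
    rw [hasFiniteIntegral_iff_norm]
    calc ∫⁻ q : E3 × E3,
          ENNReal.ofReal ‖f₁ q.1 * f₂ q.2 * f₃ (q.1 + y) * f₄ (q.2 + y) / ‖q.1 - q.2‖‖
        = ∫⁻ q : E3 × E3, ENNReal.ofReal (f₁ q.1) * ENNReal.ofReal (f₂ q.2) *
            ENNReal.ofReal (f₃ (q.1 + y)) * ENNReal.ofReal (f₄ (q.2 + y)) *
            K (q.1 - q.2) := by
          refine lintegral_congr fun q => ?_
          rw [Real.norm_of_nonneg (hRnn y q)]
          exact hofReal y q
      _ ≤ M := hbound y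
      _ < ∞ := hM.lt_top
  set L : E3 → ℝ≥0∞ := fun y => ∫⁻ q : E3 × E3,
      ENNReal.ofReal (f₁ q.1) * ENNReal.ofReal (f₂ q.2) *
        ENNReal.ofReal (f₃ (q.1 + y)) * ENNReal.ofReal (f₄ (q.2 + y)) *
        K (q.1 - q.2) with hLdef
  have hLmeas : Measurable L := by
    refine Measurable.lintegral_prod_right ?_
    have : Measurable fun z : E3 × (E3 × E3) =>
        ENNReal.ofReal (f₁ z.2.1) * ENNReal.ofReal (f₂ z.2.2) *
          ENNReal.ofReal (f₃ (z.2.1 + z.1)) * ENNReal.ofReal (f₄ (z.2.2 + z.1)) *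
          K (z.2.1 - z.2.2) := by fun_prop
    exact this
  have hSeq : (fun y => ∫ q : E3 × E3,
      f₁ q.1 * f₂ q.2 * f₃ (q.1 + y) * f₄ (q.2 + y) / ‖q.1 - q.2‖)
      = fun y => (L y).toReal := by
    funext y
    rw [integral_eq_lintegral_of_nonneg_ae (Filter.Eventually.of_forall (hRnn y))
      (hRmeas y).aestronglyMeasurable]
    congr 1
    exact lintegral_congr (hofReal y)
  have hSmeas : Measurable fun y => (L y).toReal := hLmeas.ennreal_toReal
  have hmemtop : ∀ n : ℕ, MemLp (fun y => (L y).toReal) ∞ (volume.withDensity (W n)) := by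
    intro n
    refine memLp_top_of_bound hSmeas.aestronglyMeasurable M.toReal
      (Filter.Eventually.of_forall fun y => ?_)
    rw [Real.norm_of_nonneg ENNReal.toReal_nonneg]
    exact ENNReal.toReal_mono hM (hbound y)
  have hmemone : ∀ n : ℕ, MemLp (fun y => (L y).toReal) 1 (volume.withDensity (W n)) := by
    intro n
    refine ⟨hSmeas.aestronglyMeasurable, ?_⟩
    rw [eLpNorm_one_eq_lintegral_enorm,
      lintegral_withDensity_eq_lintegral_mul _ (measurable_W n) (by fun_prop)]
    have hle : (∫⁻ y, ((W n) * fun y => ((‖(L y).toReal‖₊ : ℝ≥0∞))) y)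
        ≤ ∫⁻ y, W n y * L y := by
      refine lintegral_mono fun y => ?_
      simp only [Pi.mul_apply]
      gcongr
      rw [← enorm_eq_nnnorm, Real.enorm_eq_ofReal ENNReal.toReal_nonneg]
      exact ENNReal.ofReal_toReal_le
    refine lt_of_le_of_lt hle ?_
    have hbw := bound_weighted n _ _ _ _ hF₁ hF₂ hF₃ hF₄ C₂ C₄ hb₂ hb₄
    refine lt_of_le_of_lt hbw ?_
    refine ENNReal.mul_lt_top (ENNReal.mul_lt_top ofReal_lt_top ?_) ?_
    · exact ENNReal.mul_lt_top (hI₁ n)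
        (ENNReal.add_lt_top.2 ⟨ENNReal.mul_lt_top hC₂.lt_top kappa_lt_top, hIp₂⟩)
    · exact ENNReal.mul_lt_top (hI₃ n) hC₄.lt_top
  refine ⟨hint, ?_⟩
  rw [hSeq]
  intro p n hp
  exact memLp_of_one_top (hmemone n) (hmemtop n) hp

end ClassSAux

open ClassSAux in
/-- If `f₁, f₂, f₃, f₄ : ℝ³ → [0,∞)` belong to the class `S`, then for
every `y ∈ ℝ³` the double integral
`S(y) = ∬ f₁(u) f₂(v) f₃(u+y) f₄(v+y) / |u−v| du dv` is finite, and `y ↦ S(y)`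
belongs to the class `S`. -/
theorem classS_doubleIntegral (f₁ f₂ f₃ f₄ : EuclideanSpace ℝ (Fin 3) → ℝ)
    (hnn₁ : ∀ x, 0 ≤ f₁ x) (hnn₂ : ∀ x, 0 ≤ f₂ x)
    (hnn₃ : ∀ x, 0 ≤ f₃ x) (hnn₄ : ∀ x, 0 ≤ f₄ x)
    (hS₁ : classS f₁) (hS₂ : classS f₂) (hS₃ : classS f₃) (hS₄ : classS f₄) :
    (∀ y : EuclideanSpace ℝ (Fin 3),
      Integrable (fun p : EuclideanSpace ℝ (Fin 3) × EuclideanSpace ℝ (Fin 3) =>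
        f₁ p.1 * f₂ p.2 * f₃ (p.1 + y) * f₄ (p.2 + y) / ‖p.1 - p.2‖) volume) ∧
    classS (fun y =>
      ∫ p : EuclideanSpace ℝ (Fin 3) × EuclideanSpace ℝ (Fin 3),
        f₁ p.1 * f₂ p.2 * f₃ (p.1 + y) * f₄ (p.2 + y) / ‖p.1 - p.2‖) := by
  classical
  have haem : ∀ f : E3 → ℝ, classS f → AEMeasurable f (volume : Measure E3) := fun f hf =>
    ((hf 1 0 le_rfl).1.mono_ac (vol_ac 0)).aemeasurable
  have ha₁ := haem f₁ hS₁
  have ha₂ := haem f₂ hS₂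
  have ha₃ := haem f₃ hS₃
  have ha₄ := haem f₄ hS₄
  set g₁ : E3 → ℝ := fun x => max (ha₁.mk f₁ x) 0 with hg₁def
  set g₂ : E3 → ℝ := fun x => max (ha₂.mk f₂ x) 0 with hg₂def
  set g₃ : E3 → ℝ := fun x => max (ha₃.mk f₃ x) 0 with hg₃def
  set g₄ : E3 → ℝ := fun x => max (ha₄.mk f₄ x) 0 with hg₄def
  have hgm₁ : Measurable g₁ := ha₁.measurable_mk.max measurable_const
  have hgm₂ : Measurable g₂ := ha₂.measurable_mk.max measurable_const
  have hgm₃ : Measurable g₃ := ha₃.measurable_mk.max measurable_const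
  have hgm₄ : Measurable g₄ := ha₄.measurable_mk.max measurable_const
  have hgnn₁ : ∀ x, 0 ≤ g₁ x := fun x => le_max_right _ _
  have hgnn₂ : ∀ x, 0 ≤ g₂ x := fun x => le_max_right _ _
  have hgnn₃ : ∀ x, 0 ≤ g₃ x := fun x => le_max_right _ _
  have hgnn₄ : ∀ x, 0 ≤ g₄ x := fun x => le_max_right _ _
  have hfg₁ : f₁ =ᵐ[(volume : Measure E3)] g₁ := by
    filter_upwards [ha₁.ae_eq_mk] with x hx
    have h : max (AEMeasurable.mk f₁ ha₁ x) 0 = f₁ x := by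
      rw [← hx]; exact max_eq_left (hnn₁ x)
    exact h.symm
  have hfg₂ : f₂ =ᵐ[(volume : Measure E3)] g₂ := by
    filter_upwards [ha₂.ae_eq_mk] with x hx
    have h : max (AEMeasurable.mk f₂ ha₂ x) 0 = f₂ x := by
      rw [← hx]; exact max_eq_left (hnn₂ x)
    exact h.symm
  have hfg₃ : f₃ =ᵐ[(volume : Measure E3)] g₃ := by
    filter_upwards [ha₃.ae_eq_mk] with x hx
    have h : max (AEMeasurable.mk f₃ ha₃ x) 0 = f₃ x := by
      rw [← hx]; exact max_eq_left (hnn₃ x)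
    exact h.symm
  have hfg₄ : f₄ =ᵐ[(volume : Measure E3)] g₄ := by
    filter_upwards [ha₄.ae_eq_mk] with x hx
    have h : max (AEMeasurable.mk f₄ ha₄ x) 0 = f₄ x := by
      rw [← hx]; exact max_eq_left (hnn₄ x)
    exact h.symm
  have hgS₁ : classS g₁ := fun p n hp =>
    (hS₁ p n hp).ae_eq (hfg₁.filter_mono (withDensity_absolutelyContinuous _ _).ae_le)
  have hgS₂ : classS g₂ := fun p n hp =>
    (hS₂ p n hp).ae_eq (hfg₂.filter_mono (withDensity_absolutelyContinuous _ _).ae_le)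
  have hgS₃ : classS g₃ := fun p n hp =>
    (hS₃ p n hp).ae_eq (hfg₃.filter_mono (withDensity_absolutelyContinuous _ _).ae_le)
  have hgS₄ : classS g₄ := fun p n hp =>
    (hS₄ p n hp).ae_eq (hfg₄.filter_mono (withDensity_absolutelyContinuous _ _).ae_le)
  obtain ⟨hint, hclass⟩ := main g₁ g₂ g₃ g₄ hgm₁ hgm₂ hgm₃ hgm₄
    hgnn₁ hgnn₂ hgnn₃ hgnn₄ hgS₁ hgS₂ hgS₃ hgS₄
  have hfst : Measure.QuasiMeasurePreserving (Prod.fst : E3 × E3 → E3)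
      (volume : Measure (E3 × E3)) volume := Measure.quasiMeasurePreserving_fst
  have hsnd : Measure.QuasiMeasurePreserving (Prod.snd : E3 × E3 → E3)
      (volume : Measure (E3 × E3)) volume := Measure.quasiMeasurePreserving_snd
  have heq : ∀ y : E3,
      (fun q : E3 × E3 => f₁ q.1 * f₂ q.2 * f₃ (q.1 + y) * f₄ (q.2 + y) / ‖q.1 - q.2‖)
        =ᵐ[(volume : Measure (E3 × E3))]
      (fun q : E3 × E3 => g₁ q.1 * g₂ q.2 * g₃ (q.1 + y) * g₄ (q.2 + y) / ‖q.1 - q.2‖) := by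
    intro y
    have h1 := hfst.ae_eq hfg₁
    have h2 := hsnd.ae_eq hfg₂
    have h3 := (((measurePreserving_add_right volume y).quasiMeasurePreserving).comp
      hfst).ae_eq hfg₃
    have h4 := (((measurePreserving_add_right volume y).quasiMeasurePreserving).comp
      hsnd).ae_eq hfg₄
    filter_upwards [h1, h2, h3, h4] with q e1 e2 e3 e4
    simp only [Function.comp_apply] at e1 e2 e3 e4
    rw [e1, e2, e3, e4]
  constructor
  · intro y
    exact (hint y).congr (heq y).symm
  · have hfun : (fun y => ∫ q : E3 × E3,
        f₁ q.1 * f₂ q.2 * f₃ (q.1 + y) * f₄ (q.2 + y) / ‖q.1 - q.2‖)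
        = (fun y => ∫ q : E3 × E3,
        g₁ q.1 * g₂ q.2 * g₃ (q.1 + y) * g₄ (q.2 + y) / ‖q.1 - q.2‖) :=
      funext fun y => integral_congr_ae (heq y)
    rw [hfun]
    exact hclass
end
end

section
/- Let φ ∈ L¹(ℝ³) ∩ L²(ℝ³) be radial (φ(x) depends only on |x|), nonnegative, and not equal to zero almost everywhere. Then there exist constants C₀ > 0 and r₀ > 0 such that (1/2)‖φ − T_{−y}φ‖²_{L²} ≥ C₀ |y|² for all y ∈ ℝ³ with |y| ≤ r₀. -/
open MeasureTheory

noncomputable section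

namespace QLBT

abbrev E3 := EuclideanSpace ℝ (Fin 3)

def e₁ : E3 := EuclideanSpace.single (0 : Fin 3) (1 : ℝ)

def q (x : E3) : ℝ := 1 + ‖x‖ ^ 2

def ψ (x : E3) : ℝ := x 0 * q x ^ (-(3:ℝ)/2)

def A (x : E3) (s : ℝ) : ℝ := s ^ 2 + 2 * x 0 * s + (1 + ‖x‖ ^ 2)

def D (x : E3) (s : ℝ) : ℝ :=
  A x s ^ (-(3:ℝ)/2) - 3 * (x 0 + s) ^ 2 * A x s ^ (-(5:ℝ)/2)

lemma one_le_q (x : E3) : 1 ≤ q x := by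
  have := sq_nonneg ‖x‖; simp only [q]; linarith

lemma q_pos (x : E3) : 0 < q x := lt_of_lt_of_le one_pos (one_le_q x)

lemma sq_apply_le (x : E3) (i : Fin 3) : x i ^ 2 ≤ ‖x‖ ^ 2 := by
  have h : |x i| ≤ ‖x‖ := by
    have h1 : (inner ℝ x (EuclideanSpace.single i (1:ℝ)) : ℝ) = x i := by
      rw [EuclideanSpace.inner_single_right]; simp
    have h2 := abs_real_inner_le_norm x (EuclideanSpace.single i (1:ℝ))
    rw [h1] at h2
    simpa [EuclideanSpace.norm_single] using h2
  calc x i ^ 2 = |x i| ^ 2 := (sq_abs _).symm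
    _ ≤ ‖x‖ ^ 2 := by
        have := abs_nonneg (x i)
        nlinarith [norm_nonneg x]

lemma norm_add_smul (x : E3) (s : ℝ) : ‖x + s • e₁‖ ^ 2 = ‖x‖ ^ 2 + 2 * s * x 0 + s ^ 2 := by
  rw [@norm_add_sq_real]
  have h1 : inner ℝ x (s • e₁) = s * x 0 := by
    rw [real_inner_smul_right, e₁, EuclideanSpace.inner_single_right]
    simp [mul_comm]
  have h2 : ‖s • e₁‖ ^ 2 = s ^ 2 := by
    rw [norm_smul]
    simp [e₁, EuclideanSpace.norm_single, abs_mul_abs_self, sq_abs]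
  rw [h1, h2]; ring

lemma apply_add (x : E3) (s : ℝ) : (x + s • e₁) 0 = x 0 + s := by
  simp [e₁, EuclideanSpace.single_apply]

end QLBT

namespace QLBT

lemma A_eq (x : E3) (s : ℝ) : A x s = 1 + ‖x + s • e₁‖ ^ 2 := by
  rw [norm_add_smul, A]; ring

lemma one_le_A (x : E3) (s : ℝ) : 1 ≤ A x s := by
  rw [A_eq]; nlinarith [sq_nonneg ‖x + s • e₁‖]

lemma A_pos (x : E3) (s : ℝ) : 0 < A x s := lt_of_lt_of_le one_pos (one_le_A x s)

lemma sq_le_A (x : E3) (s : ℝ) : (x 0 + s) ^ 2 ≤ A x s := by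
  have h := sq_apply_le (x + s • e₁) 0
  rw [apply_add] at h
  rw [A_eq]; nlinarith

lemma psi_eq (x : E3) : (fun s : ℝ => ψ (x + s • e₁)) =
    fun s => (x 0 + s) * A x s ^ (-(3:ℝ)/2) := by
  funext s
  rw [ψ, apply_add, q, norm_add_smul]
  congr 1
  rw [A]; ring_nf

lemma hasDerivAt_psi (x : E3) (s : ℝ) :
    HasDerivAt (fun t : ℝ => ψ (x + t • e₁)) (D x s) s := by
  rw [psi_eq]
  have hA : HasDerivAt (fun t : ℝ => A x t) (2 * s + 2 * x 0) s := by
    have h1 : HasDerivAt (fun t : ℝ => t ^ 2) (2 * s) s := by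
      simpa using hasDerivAt_pow 2 s
    have h2 : HasDerivAt (fun t : ℝ => 2 * x 0 * t) (2 * x 0) s := by
      simpa using (hasDerivAt_id s).const_mul (2 * x 0)
    simpa [A] using (h1.add h2).add_const (1 + ‖x‖ ^ 2)
  have hrpow : HasDerivAt (fun t : ℝ => A x t ^ (-(3:ℝ)/2))
      ((2 * s + 2 * x 0) * (-(3:ℝ)/2) * A x s ^ ((-(3:ℝ)/2) - 1)) s :=
    hA.rpow_const (Or.inl (ne_of_gt (A_pos x s)))
  have hlin : HasDerivAt (fun t : ℝ => x 0 + t) 1 s := by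
    simpa using (hasDerivAt_id s).const_add (x 0)
  have : HasDerivAt (fun t : ℝ => (x 0 + t) * A x t ^ (-(3:ℝ)/2))
      (1 * A x s ^ (-(3:ℝ)/2) + (x 0 + s) * ((2 * s + 2 * x 0) * (-(3:ℝ)/2) * A x s ^ ((-(3:ℝ)/2) - 1))) s :=
    hlin.mul hrpow
  convert this using 1
  have he : (-(3:ℝ)/2) - 1 = -(5:ℝ)/2 := by norm_num
  rw [D, he]; ring

lemma rpow_le_one' (a : ℝ) (ha : 1 ≤ a) (c : ℝ) (hc : c ≤ 0) : a ^ c ≤ 1 :=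
  Real.rpow_le_one_of_one_le_of_nonpos ha hc

lemma abs_D_le (x : E3) (s : ℝ) : |D x s| ≤ 4 := by
  have hA1 : 1 ≤ A x s := one_le_A x s
  have hA0 : 0 < A x s := A_pos x s
  have h3 : A x s ^ (-(3:ℝ)/2) ≤ 1 := rpow_le_one' _ hA1 _ (by norm_num)
  have h3p : 0 < A x s ^ (-(3:ℝ)/2) := Real.rpow_pos_of_pos hA0 _
  have h5p : 0 < A x s ^ (-(5:ℝ)/2) := Real.rpow_pos_of_pos hA0 _
  have key : (x 0 + s) ^ 2 * A x s ^ (-(5:ℝ)/2) ≤ A x s ^ (-(3:ℝ)/2) := by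
    have h := sq_le_A x s
    have hmul : A x s * A x s ^ (-(5:ℝ)/2) = A x s ^ (-(3:ℝ)/2) := by
      have : (-(3:ℝ)/2) = 1 + (-(5:ℝ)/2) := by norm_num
      rw [this, Real.rpow_add hA0, Real.rpow_one]
    calc (x 0 + s) ^ 2 * A x s ^ (-(5:ℝ)/2) ≤ A x s * A x s ^ (-(5:ℝ)/2) := by
          exact mul_le_mul_of_nonneg_right h (le_of_lt h5p)
      _ = A x s ^ (-(3:ℝ)/2) := hmul
  rw [D, abs_le]
  constructor <;> nlinarith [sq_nonneg (x 0 + s)]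

end QLBT

namespace QLBT

lemma abs_psi_diff_le (x : E3) (s : ℝ) : |ψ (x + s • e₁) - ψ x| ≤ 4 * |s| := by
  have h := Convex.norm_image_sub_le_of_norm_hasDerivWithin_le
    (f := fun t : ℝ => ψ (x + t • e₁)) (f' := fun t => D x t) (C := 4)
    (fun t _ => (hasDerivAt_psi x t).hasDerivWithinAt)
    (fun t _ => by simpa [Real.norm_eq_abs] using abs_D_le x t)
    (convex_univ) (Set.mem_univ (0:ℝ)) (Set.mem_univ s)
  simpa [Real.norm_eq_abs] using h

lemma continuous_q : Continuous q := by
  exact continuous_const.add (continuous_norm.pow 2)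

lemma continuous_rpow_q (c : ℝ) : Continuous (fun x : E3 => q x ^ c) :=
  continuous_q.rpow_const (fun x => Or.inl (ne_of_gt (q_pos x)))

lemma continuous_apply0 : Continuous (fun x : E3 => x 0) := by
  exact (continuous_apply (0 : Fin 3)).comp (PiLp.continuous_ofLp (p := 2) (β := fun _ : Fin 3 => ℝ))

lemma continuous_psi : Continuous ψ :=
  continuous_apply0.mul (continuous_rpow_q _)

/-- Composition with a linear isometry equivalence preserves integrals. -/
lemma integral_comp_iso (R : E3 ≃ₗᵢ[ℝ] E3) (F : E3 → ℝ) :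
    ∫ x, F (R x) = ∫ x, F x :=
  R.measurePreserving.integral_comp R.toHomeomorph.measurableEmbedding F

/-- Cauchy–Schwarz for real integrals. -/
lemma cauchy_schwarz (f h : E3 → ℝ) (hf : MemLp f 2 volume) (hh : MemLp h 2 volume) :
    (∫ x, f x * h x) ^ 2 ≤ (∫ x, f x ^ 2) * ∫ x, h x ^ 2 := by
  have hf2 : Integrable (fun x => f x ^ 2) volume := hf.integrable_sq
  have hh2 : Integrable (fun x => h x ^ 2) volume := hh.integrable_sq
  have hfh : Integrable (fun x => f x * h x) volume := by
    refine Integrable.mono' ((hf2.add hh2).const_mul (1/2)) (hf.1.mul hh.1) ?_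
    filter_upwards with x
    have h1 : ‖f x * h x‖ = |f x| * |h x| := by rw [Real.norm_eq_abs, abs_mul]
    rw [h1]
    have h2 : f x ^ 2 = |f x| ^ 2 := (sq_abs _).symm
    have h3 : h x ^ 2 = |h x| ^ 2 := (sq_abs _).symm
    simp only [Pi.add_apply]
    nlinarith [sq_nonneg (|f x| - |h x|), abs_nonneg (f x), abs_nonneg (h x)]
  set A := ∫ x, f x ^ 2 with hA
  set B := ∫ x, h x ^ 2 with hB
  set C := ∫ x, f x * h x with hC
  have hA0 : 0 ≤ A := integral_nonneg fun x => sq_nonneg _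
  rcases eq_or_lt_of_le hA0 with hA0' | hApos
  · have hfz : f =ᵐ[volume] 0 := by
      have := (integral_eq_zero_iff_of_nonneg (fun x => sq_nonneg (f x)) hf2).mp hA0'.symm
      filter_upwards [this] with x hx
      have : f x ^ 2 = 0 := hx
      exact pow_eq_zero_iff (n := 2) (by norm_num) |>.mp this
    have hCz : C = 0 := by
      rw [hC]
      have hz : (fun x => f x * h x) =ᵐ[volume] 0 := by
        filter_upwards [hfz] with x hx
        simp [hx]
      rw [integral_congr_ae hz]; simp
    have hB0 : 0 ≤ B := integral_nonneg fun x => sq_nonneg _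
    nlinarith
  · have key : 0 ≤ A * B - C ^ 2 := by
      have hquad : ∀ t : ℝ, 0 ≤ A * t ^ 2 - 2 * C * t + B := by
        intro t
        have : 0 ≤ ∫ x, (t * f x - h x) ^ 2 :=
          integral_nonneg fun x => sq_nonneg _
        have hexpand : (∫ x, (t * f x - h x) ^ 2)
            = t ^ 2 * A - 2 * t * C + B := by
          have h1 : ∀ x, (t * f x - h x) ^ 2
              = t ^ 2 * f x ^ 2 - 2 * t * (f x * h x) + h x ^ 2 := by
            intro x; ring
          simp_rw [h1]
          have i1 : Integrable (fun x => t ^ 2 * f x ^ 2) volume := hf2.const_mul (t^2)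
          have i2 : Integrable (fun x => 2 * t * (f x * h x)) volume := hfh.const_mul (2*t)
          have i3 : Integrable (fun x => t ^ 2 * f x ^ 2 - 2 * t * (f x * h x)) volume := i1.sub i2
          rw [integral_add i3 hh2, integral_sub i1 i2, MeasureTheory.integral_const_mul, MeasureTheory.integral_const_mul]
        rw [hexpand] at this
        linarith
      have hA' : A ≠ 0 := ne_of_gt hApos
      have h4 := mul_le_mul_of_nonneg_left (hquad (C / A)) (le_of_lt hApos)
      have h5 : A * (A * (C / A) ^ 2 - 2 * C * (C / A) + B) = A * B - C ^ 2 := by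
        field_simp; ring
      rw [mul_zero, h5] at h4
      linarith
    linarith

end QLBT

namespace QLBT

open Filter Topology

def w5 (x : E3) : ℝ := q x ^ (-(5:ℝ)/2)
def w3 (x : E3) : ℝ := q x ^ (-(3:ℝ)/2)
def m (x : E3) : ℝ := q x ^ (-(4:ℝ)/2)

lemma w5_pos (x : E3) : 0 < w5 x := Real.rpow_pos_of_pos (q_pos x) _
lemma w5_le_one (x : E3) : w5 x ≤ 1 := rpow_le_one' _ (one_le_q x) _ (by norm_num)
lemma w3_pos (x : E3) : 0 < w3 x := Real.rpow_pos_of_pos (q_pos x) _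
lemma w3_le_one (x : E3) : w3 x ≤ 1 := rpow_le_one' _ (one_le_q x) _ (by norm_num)
lemma m_pos (x : E3) : 0 < m x := Real.rpow_pos_of_pos (q_pos x) _

lemma q_mul_w5 (x : E3) : q x * w5 x = w3 x := by
  rw [w5, w3]
  have h : (-(3:ℝ)/2) = 1 + (-(5:ℝ)/2) := by norm_num
  rw [h, Real.rpow_add (q_pos x), Real.rpow_one]

lemma q_mul_m (x : E3) : q x * q x ^ (-(3:ℝ)) = m x := by
  rw [m]
  have h : (-(4:ℝ)/2) = 1 + (-(3:ℝ)) := by norm_num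
  rw [h, Real.rpow_add (q_pos x), Real.rpow_one]

lemma sq_w3 (x : E3) : w3 x ^ 2 = q x ^ (-(3:ℝ)) := by
  rw [w3, ← Real.rpow_natCast (q x ^ (-(3:ℝ)/2)) 2, ← Real.rpow_mul (le_of_lt (q_pos x))]
  norm_num

lemma xi_sq_w5_le_one (x : E3) (i : Fin 3) : x i ^ 2 * w5 x ≤ 1 := by
  have h1 : x i ^ 2 ≤ q x := le_trans (sq_apply_le x i) (by rw [q]; linarith)
  calc x i ^ 2 * w5 x ≤ q x * w5 x :=
        mul_le_mul_of_nonneg_right h1 (le_of_lt (w5_pos x))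
    _ = w3 x := q_mul_w5 x
    _ ≤ 1 := w3_le_one x

lemma norm_sq_w5_le_one (x : E3) : ‖x‖ ^ 2 * w5 x ≤ 1 := by
  have h1 : ‖x‖ ^ 2 ≤ q x := by rw [q]; linarith
  calc ‖x‖ ^ 2 * w5 x ≤ q x * w5 x :=
        mul_le_mul_of_nonneg_right h1 (le_of_lt (w5_pos x))
    _ = w3 x := q_mul_w5 x
    _ ≤ 1 := w3_le_one x

lemma D_zero (x : E3) : D x 0 = w3 x - 3 * x 0 ^ 2 * w5 x := by
  have hA : A x 0 = q x := by rw [A, q]; ring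
  rw [D, hA, w3, w5]; ring_nf

lemma continuous_w5 : Continuous w5 := continuous_rpow_q _
lemma continuous_w3 : Continuous w3 := continuous_rpow_q _
lemma continuous_m : Continuous m := continuous_rpow_q _

lemma int_phi_mul {φ : E3 → ℝ} (hL1 : Integrable φ volume) {g : E3 → ℝ}
    (hg : Continuous g) {C : ℝ} (hC : ∀ x, |g x| ≤ C) :
    Integrable (fun x => φ x * g x) volume := by
  have := hL1.bdd_mul hg.aestronglyMeasurable (c := C) (.of_forall fun x => by
    simpa [Real.norm_eq_abs] using hC x)
  simpa [mul_comm] using this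

lemma norm_e₁ : ‖e₁‖ = 1 := by
  rw [e₁, EuclideanSpace.norm_single]; norm_num

lemma integrable_m : Integrable m volume := by
  have := integrable_rpow_neg_one_add_norm_sq (E := E3) (μ := volume) (r := 4)
    (by norm_num [finrank_euclideanSpace])
  have heq : ∀ x : E3, ((1:ℝ) + ‖x‖ ^ 2) ^ (-(4:ℝ)/2) = m x := by
    intro x; rw [m, q]
  simpa [heq] using this

lemma M_pos : 0 < ∫ x, m x := by
  rw [integral_pos_iff_support_of_nonneg (fun x => le_of_lt (m_pos x)) integrable_m]
  have hsupp : Function.support m = Set.univ := by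
    rw [Set.eq_univ_iff_forall]
    exact fun x => ne_of_gt (m_pos x)
  rw [hsupp]
  exact IsOpen.measure_pos volume isOpen_univ ⟨0, trivial⟩

/-- the inner-weighted function -/
def ge (e : E3) (x : E3) : ℝ := (inner ℝ x e : ℝ) * w3 x

lemma ge_e₁ (x : E3) : ge e₁ x = ψ x := by
  rw [ge, ψ, w3, e₁, EuclideanSpace.inner_single_right]
  simp

lemma continuous_ge (e : E3) : Continuous (ge e) :=
  ((continuous_id.inner continuous_const)).mul continuous_w3

lemma abs_ge_le (e : E3) (he : ‖e‖ = 1) (x : E3) : |ge e x| ≤ 1 := by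
  have h1 : |(inner ℝ x e : ℝ)| ≤ ‖x‖ := by
    have := abs_real_inner_le_norm x e
    rwa [he, mul_one] at this
  have h2 : ‖x‖ * w3 x ≤ 1 := by
    by_cases hx : ‖x‖ ≤ 1
    · calc ‖x‖ * w3 x ≤ 1 * 1 :=
          mul_le_mul hx (w3_le_one x) (le_of_lt (w3_pos x)) zero_le_one
        _ = 1 := by ring
    · push_neg at hx
      have h3 : ‖x‖ * w3 x ≤ ‖x‖ ^ 2 * w3 x := by
        have : ‖x‖ ≤ ‖x‖ ^ 2 := by nlinarith
        exact mul_le_mul_of_nonneg_right this (le_of_lt (w3_pos x))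
      have h4 : ‖x‖ ^ 2 * w3 x ≤ q x * w3 x := by
        have : ‖x‖ ^ 2 ≤ q x := by rw [q]; linarith
        exact mul_le_mul_of_nonneg_right this (le_of_lt (w3_pos x))
      have h5 : q x * w3 x = q x ^ (-(1:ℝ)/2) := by
        rw [w3]
        have h : (-(1:ℝ)/2) = 1 + (-(3:ℝ)/2) := by norm_num
        rw [h, Real.rpow_add (q_pos x), Real.rpow_one]
      have h6 : q x ^ (-(1:ℝ)/2) ≤ 1 := rpow_le_one' _ (one_le_q x) _ (by norm_num)
      linarith
  calc |ge e x| = |(inner ℝ x e : ℝ)| * |w3 x| := by rw [ge, abs_mul]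
    _ ≤ ‖x‖ * w3 x := by
        rw [abs_of_pos (w3_pos x)]
        exact mul_le_mul_of_nonneg_right h1 (le_of_lt (w3_pos x))
    _ ≤ 1 := h2

lemma sq_ge_le_m (e : E3) (he : ‖e‖ = 1) (x : E3) : ge e x ^ 2 ≤ m x := by
  have h1 : (inner ℝ x e : ℝ) ^ 2 ≤ ‖x‖ ^ 2 := by
    have h := abs_real_inner_le_norm x e
    rw [he, mul_one] at h
    calc (inner ℝ x e : ℝ) ^ 2 = |(inner ℝ x e : ℝ)| ^ 2 := (sq_abs _).symm
      _ ≤ ‖x‖ ^ 2 := by nlinarith [abs_nonneg (inner ℝ x e : ℝ), norm_nonneg x]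
  have h2 : ‖x‖ ^ 2 ≤ q x := by rw [q]; linarith
  have h3 : 0 < q x ^ (-(3:ℝ)) := Real.rpow_pos_of_pos (q_pos x) _
  calc ge e x ^ 2 = (inner ℝ x e : ℝ) ^ 2 * (w3 x ^ 2) := by rw [ge]; ring
    _ ≤ q x * q x ^ (-(3:ℝ)) := by
        rw [sq_w3]
        exact mul_le_mul (le_trans h1 h2) le_rfl (le_of_lt h3) (le_of_lt (q_pos x))
    _ = m x := q_mul_m x

lemma memLp_ge (e : E3) (he : ‖e‖ = 1) : MemLp (ge e) 2 volume := by
  rw [memLp_two_iff_integrable_sq (continuous_ge e).aestronglyMeasurable]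
  refine Integrable.mono' integrable_m
    (((continuous_ge e).pow 2).aestronglyMeasurable) ?_
  filter_upwards with x
  rw [Real.norm_eq_abs, abs_of_nonneg (sq_nonneg _)]
  exact sq_ge_le_m e he x

end QLBT

namespace QLBT

open Filter Topology

variable {φ : E3 → ℝ}

lemma continuous_apply_fin (j : Fin 3) : Continuous (fun x : E3 => x j) :=
  (continuous_apply j).comp (PiLp.continuous_ofLp (p := 2) (β := fun _ : Fin 3 => ℝ))

lemma norm_sq_eq_sum3 (x : E3) : ‖x‖ ^ 2 = x 0 ^ 2 + x 1 ^ 2 + x 2 ^ 2 := by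
  rw [EuclideanSpace.norm_eq, Real.sq_sqrt (by positivity)]
  simp [Fin.sum_univ_three, sq_abs]

lemma phi_comp_iso (hradial : ∀ x y : E3, ‖x‖ = ‖y‖ → φ x = φ y)
    (R : E3 ≃ₗᵢ[ℝ] E3) (x : E3) : φ (R x) = φ x :=
  hradial _ _ (R.norm_map x)

lemma J_eq (hL1 : Integrable φ volume)
    (hradial : ∀ x y : E3, ‖x‖ = ‖y‖ → φ x = φ y) (i : Fin 3) :
    ∫ x, φ x * (x i ^ 2 * w5 x) = ∫ x, φ x * (x 0 ^ 2 * w5 x) := by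
  set u : E3 := EuclideanSpace.single (0 : Fin 3) (1:ℝ) with hu
  set v : E3 := EuclideanSpace.single i (1:ℝ) with hv
  have hnorm : ‖u‖ = ‖v‖ := by
    rw [hu, hv, EuclideanSpace.norm_single, EuclideanSpace.norm_single]
  set R : E3 ≃ₗᵢ[ℝ] E3 := Submodule.reflection (ℝ ∙ (u - v))ᗮ with hR
  have hRu : R u = v := Submodule.reflection_sub hnorm
  have hRv : R v = u := by
    have h := congrArg R hRu
    rw [hR, Submodule.reflection_reflection] at h
    rw [hR]
    exact h.symm
  have key := integral_comp_iso R (fun x => φ x * (x 0 ^ 2 * w5 x))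
  have hcongr : ∀ z : E3, φ (R z) * ((R z) 0 ^ 2 * w5 (R z))
      = φ z * (z i ^ 2 * w5 z) := by
    intro z
    have h0 : (R z) 0 = (inner ℝ (R z) u : ℝ) := by
      rw [hu, EuclideanSpace.inner_single_right]; simp
    have h1 : (inner ℝ (R z) u : ℝ) = (inner ℝ z v : ℝ) := by
      conv_lhs => rw [← hRv]
      exact R.inner_map_map z v
    have h2 : (inner ℝ z v : ℝ) = z i := by
      rw [hv, EuclideanSpace.inner_single_right]; simp
    have h3 : w5 (R z) = w5 z := by rw [w5, w5, q, q, R.norm_map]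
    rw [phi_comp_iso hradial R z, h0, h1, h2, h3]
  calc ∫ x, φ x * (x i ^ 2 * w5 x)
      = ∫ z, φ (R z) * ((R z) 0 ^ 2 * w5 (R z)) := by
        exact (integral_congr_ae (Filter.Eventually.of_forall hcongr)).symm
    _ = ∫ x, φ x * (x 0 ^ 2 * w5 x) := key

lemma Kprime_eq (hL1 : Integrable φ volume)
    (hradial : ∀ x y : E3, ‖x‖ = ‖y‖ → φ x = φ y) :
    ∫ x, φ x * D x 0 = ∫ x, φ x * w5 x := by
  have i3 : ∀ j : Fin 3, Integrable (fun x => φ x * (x j ^ 2 * w5 x)) volume := by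
    intro j
    refine int_phi_mul hL1 (Continuous.mul ?_ continuous_w5) (C := 1) ?_
    · exact (continuous_apply_fin j).pow 2
    · intro x
      rw [abs_of_nonneg (mul_nonneg (sq_nonneg _) (le_of_lt (w5_pos x)))]
      exact xi_sq_w5_le_one x j
  have iw3 : Integrable (fun x => φ x * w3 x) volume :=
    int_phi_mul hL1 continuous_w3 (C := 1)
      (fun x => by rw [abs_of_pos (w3_pos x)]; exact w3_le_one x)
  have iw5 : Integrable (fun x => φ x * w5 x) volume :=
    int_phi_mul hL1 continuous_w5 (C := 1)
      (fun x => by rw [abs_of_pos (w5_pos x)]; exact w5_le_one x)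
  have inorm : Integrable (fun x => φ x * (‖x‖ ^ 2 * w5 x)) volume := by
    refine int_phi_mul hL1 ((continuous_norm.pow 2).mul continuous_w5) (C := 1) ?_
    intro x
    rw [abs_of_nonneg (mul_nonneg (sq_nonneg _) (le_of_lt (w5_pos x)))]
    exact norm_sq_w5_le_one x
  -- sum of the three coordinate integrals
  have hsum : ∀ x : E3, φ x * (‖x‖ ^ 2 * w5 x)
      = φ x * (x 0 ^ 2 * w5 x) + φ x * (x 1 ^ 2 * w5 x) + φ x * (x 2 ^ 2 * w5 x) := by
    intro x
    rw [norm_sq_eq_sum3 x]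
    ring
  have h3J : ∫ x, φ x * (‖x‖ ^ 2 * w5 x) = 3 * ∫ x, φ x * (x 0 ^ 2 * w5 x) := by
    calc ∫ x, φ x * (‖x‖ ^ 2 * w5 x)
        = ∫ x, (φ x * (x 0 ^ 2 * w5 x) + φ x * (x 1 ^ 2 * w5 x)
            + φ x * (x 2 ^ 2 * w5 x)) := integral_congr_ae (.of_forall hsum)
      _ = (∫ x, φ x * (x 0 ^ 2 * w5 x)) + (∫ x, φ x * (x 1 ^ 2 * w5 x))
            + ∫ x, φ x * (x 2 ^ 2 * w5 x) := by
          have i12 : Integrable (fun x => φ x * (x 0 ^ 2 * w5 x)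
              + φ x * (x 1 ^ 2 * w5 x)) volume := (i3 0).add (i3 1)
          rw [integral_add i12 (i3 2), integral_add (i3 0) (i3 1)]
      _ = 3 * ∫ x, φ x * (x 0 ^ 2 * w5 x) := by
          rw [J_eq hL1 hradial 1, J_eq hL1 hradial 2]; ring
  have hD : ∀ x : E3, φ x * D x 0 = φ x * w3 x - 3 * (φ x * (x 0 ^ 2 * w5 x)) := by
    intro x; rw [D_zero]; ring
  have hw : ∀ x : E3, φ x * w3 x - φ x * (‖x‖ ^ 2 * w5 x) = φ x * w5 x := by
    intro x
    have : w3 x - ‖x‖ ^ 2 * w5 x = w5 x := by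
      rw [← q_mul_w5, q]; ring
    calc φ x * w3 x - φ x * (‖x‖ ^ 2 * w5 x) = φ x * (w3 x - ‖x‖ ^ 2 * w5 x) := by ring
      _ = φ x * w5 x := by rw [this]
  calc ∫ x, φ x * D x 0
      = ∫ x, (φ x * w3 x - 3 * (φ x * (x 0 ^ 2 * w5 x))) :=
        integral_congr_ae (.of_forall hD)
    _ = (∫ x, φ x * w3 x) - 3 * ∫ x, φ x * (x 0 ^ 2 * w5 x) := by
        rw [integral_sub iw3 ((i3 0).const_mul 3), MeasureTheory.integral_const_mul]
    _ = (∫ x, φ x * w3 x) - ∫ x, φ x * (‖x‖ ^ 2 * w5 x) := by rw [h3J]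
    _ = ∫ x, (φ x * w3 x - φ x * (‖x‖ ^ 2 * w5 x)) := (integral_sub iw3 inorm).symm
    _ = ∫ x, φ x * w5 x := integral_congr_ae (.of_forall hw)

end QLBT

namespace QLBT

open Filter Topology

variable {φ : E3 → ℝ}

lemma K_pos (hL1 : Integrable φ volume) (hnonneg : ∀ x, 0 ≤ φ x)
    (hne : ¬ (φ =ᵐ[volume] 0)) : 0 < ∫ x, φ x * w5 x := by
  have iw5 : Integrable (fun x => φ x * w5 x) volume :=
    int_phi_mul hL1 continuous_w5 (C := 1)
      (fun x => by rw [abs_of_pos (w5_pos x)]; exact w5_le_one x)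
  have hnn : ∀ x, 0 ≤ φ x * w5 x := fun x =>
    mul_nonneg (hnonneg x) (le_of_lt (w5_pos x))
  rcases eq_or_lt_of_le (integral_nonneg (f := fun x => φ x * w5 x) (μ := volume) hnn) with h0 | h
  · exfalso
    have hz := (integral_eq_zero_iff_of_nonneg hnn iw5).mp h0.symm
    apply hne
    filter_upwards [hz] with x hx
    have : φ x * w5 x = 0 := hx
    rcases mul_eq_zero.mp this with h | h
    · exact h
    · exact absurd h (ne_of_gt (w5_pos x))
  · exact h

lemma tendsto_main (hL1 : Integrable φ volume) :
    Tendsto (fun s : ℝ => ∫ x, φ x * ((ψ (x + s • e₁) - ψ x) / s))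
      (𝓝[>] (0:ℝ)) (𝓝 (∫ x, φ x * D x 0)) := by
  apply tendsto_integral_filter_of_dominated_convergence
    (bound := fun x => 4 * |φ x|)
  · filter_upwards with s
    have hc : Continuous (fun x : E3 => (ψ (x + s • e₁) - ψ x) / s) :=
      ((continuous_psi.comp (continuous_id.add continuous_const)).sub
        continuous_psi).div_const s
    exact hL1.aestronglyMeasurable.mul hc.aestronglyMeasurable
  · filter_upwards [self_mem_nhdsWithin] with s hs
    filter_upwards with x
    have hs0 : (0:ℝ) < s := hs
    have hd : |ψ (x + s • e₁) - ψ x| ≤ 4 * |s| := abs_psi_diff_le x s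
    rw [Real.norm_eq_abs, abs_mul, abs_div]
    have : |ψ (x + s • e₁) - ψ x| / |s| ≤ 4 := by
      rw [div_le_iff₀ (abs_pos.mpr (ne_of_gt hs0))]
      linarith
    calc |φ x| * (|ψ (x + s • e₁) - ψ x| / |s|) ≤ |φ x| * 4 :=
        mul_le_mul_of_nonneg_left this (abs_nonneg _)
      _ = 4 * |φ x| := by ring
  · exact hL1.abs.const_mul 4
  · filter_upwards with x
    have hder := hasDerivAt_psi x 0
    rw [hasDerivAt_iff_tendsto_slope] at hder
    have h := hder.mono_left
      (nhdsWithin_mono 0 (fun s hs => ne_of_gt hs))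
    have h2 : Tendsto (fun s : ℝ => (ψ (x + s • e₁) - ψ x) / s)
        (𝓝[>] (0:ℝ)) (𝓝 (D x 0)) := by
      refine h.congr (fun s => ?_)
      simp [slope_def_field]
    exact h2.const_mul (φ x)

lemma rotate_eq (hradial : ∀ x y : E3, ‖x‖ = ‖y‖ → φ x = φ y)
    {y : E3} (hy : y ≠ 0) :
    ∫ x, φ x * (ge (‖y‖⁻¹ • y) (x + y) - ge (‖y‖⁻¹ • y) x)
      = ∫ x, φ x * (ψ (x + ‖y‖ • e₁) - ψ x) := by
  set s : ℝ := ‖y‖ with hs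
  have hs0 : 0 < s := norm_pos_iff.mpr hy
  set e : E3 := s⁻¹ • y with he
  have hey : s • e = y := by
    rw [he, smul_smul, mul_inv_cancel₀ (ne_of_gt hs0), one_smul]
  have hnorm : ‖e₁‖ = ‖e‖ := by
    rw [norm_e₁, he, norm_smul, norm_inv, norm_norm, ← hs,
      inv_mul_cancel₀ (ne_of_gt hs0)]
  set R : E3 ≃ₗᵢ[ℝ] E3 := Submodule.reflection (ℝ ∙ (e₁ - e))ᗮ with hR
  have hRe : R e₁ = e := Submodule.reflection_sub hnorm
  have key := integral_comp_iso R (fun x => φ x * (ge e (x + y) - ge e x))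
  have hgeR : ∀ z : E3, ge e (R z) = ψ z := by
    intro z
    rw [ge, ψ, w3]
    have h1 : (inner ℝ (R z) e : ℝ) = z 0 := by
      rw [← hRe, R.inner_map_map]
      rw [e₁, EuclideanSpace.inner_single_right]; simp
    rw [h1, q, q, R.norm_map]
  have hcongr : ∀ z : E3, φ (R z) * (ge e (R z + y) - ge e (R z))
      = φ z * (ψ (z + s • e₁) - ψ z) := by
    intro z
    have h2 : R z + y = R (z + s • e₁) := by
      rw [map_add, LinearIsometryEquiv.map_smul, hRe, hey]
    rw [phi_comp_iso hradial R z, h2, hgeR, hgeR]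
  rw [← key]
  exact integral_congr_ae (.of_forall hcongr)

lemma translate_eq (hL1 : Integrable φ volume) {e : E3} (he : ‖e‖ = 1) (y : E3) :
    ∫ x, (φ (x - y) - φ x) * ge e x = ∫ x, φ x * (ge e (x + y) - ge e x) := by
  have hLt : Integrable (fun x : E3 => φ (x - y)) volume := by
    rw [← memLp_one_iff_integrable] at hL1 ⊢
    exact hL1.comp_measurePreserving (measurePreserving_sub_right volume y)
  have i1 : Integrable (fun x => φ (x - y) * ge e x) volume :=
    int_phi_mul hLt (continuous_ge e) (C := 1) (abs_ge_le e he)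
  have i2 : Integrable (fun x => φ x * ge e x) volume :=
    int_phi_mul hL1 (continuous_ge e) (C := 1) (abs_ge_le e he)
  have i3 : Integrable (fun x => φ x * ge e (x + y)) volume := by
    refine int_phi_mul hL1 ((continuous_ge e).comp
      (continuous_id.add continuous_const)) (C := 1) ?_
    intro x
    exact abs_ge_le e he (x + y)
  have htrans : ∫ x, φ (x - y) * ge e x = ∫ x, φ x * ge e (x + y) := by
    have h := integral_sub_right_eq_self (μ := (volume : Measure E3))
      (fun x => φ x * ge e (x + y)) y
    simpa using h
  have hL : ∫ x, (φ (x - y) - φ x) * ge e x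
      = (∫ x, φ (x - y) * ge e x) - ∫ x, φ x * ge e x := by
    have : ∀ x : E3, (φ (x - y) - φ x) * ge e x
        = φ (x - y) * ge e x - φ x * ge e x := fun x => by ring
    rw [integral_congr_ae (.of_forall this), integral_sub i1 i2]
  have hRt : ∫ x, φ x * (ge e (x + y) - ge e x)
      = (∫ x, φ x * ge e (x + y)) - ∫ x, φ x * ge e x := by
    have : ∀ x : E3, φ x * (ge e (x + y) - ge e x)
        = φ x * ge e (x + y) - φ x * ge e x := fun x => by ring
    rw [integral_congr_ae (.of_forall this), integral_sub i3 i2]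
  rw [hL, hRt, htrans]

end QLBT


open QLBT Filter Topology

/-- Let `φ ∈ L¹(ℝ³) ∩ L²(ℝ³)` be radial, nonnegative, and not
a.e. zero. Then there are `C₀ > 0` and `r₀ > 0` such that
`(1/2)‖φ − T_{−y}φ‖²_{L²} ≥ C₀ |y|²` for all `y` with `|y| ≤ r₀`. -/
theorem quadratic_lower_bound_translation (φ : EuclideanSpace ℝ (Fin 3) → ℝ)
    (hL1 : Integrable φ volume)
    (hL2 : MemLp φ 2 volume)
    (hradial : ∀ x y : EuclideanSpace ℝ (Fin 3), ‖x‖ = ‖y‖ → φ x = φ y)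
    (hnonneg : ∀ x, 0 ≤ φ x)
    (hne : ¬ (φ =ᵐ[volume] 0)) :
    ∃ C₀ > 0, ∃ r₀ > 0, ∀ y : EuclideanSpace ℝ (Fin 3), ‖y‖ ≤ r₀ →
      C₀ * ‖y‖ ^ 2 ≤ (1 / 2) * ∫ x, (φ x - φ (x - y)) ^ 2 := by
  have hK : 0 < ∫ x, φ x * w5 x := K_pos hL1 hnonneg hne
  have hM : 0 < ∫ x, m x := M_pos
  set K : ℝ := ∫ x, φ x * w5 x with hKdef
  set M : ℝ := ∫ x, m x with hMdef
  refine ⟨K ^ 2 / (8 * M), by positivity, ?_⟩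
  have hmain := tendsto_main hL1
  rw [Kprime_eq hL1 hradial] at hmain
  have hev : ∀ᶠ s in 𝓝[>] (0:ℝ),
      K / 2 < ∫ x, φ x * ((ψ (x + s • e₁) - ψ x) / s) :=
    hmain.eventually (eventually_gt_nhds (half_lt_self hK))
  obtain ⟨ε, hε, hball⟩ := Metric.mem_nhdsWithin_iff.mp hev
  refine ⟨ε / 2, by positivity, ?_⟩
  intro y hy
  by_cases hy0 : y = 0
  · subst hy0
    simp only [norm_zero, sub_zero]
    have : ∀ x : EuclideanSpace ℝ (Fin 3), (φ x - φ x) ^ 2 = 0 := fun x => by ring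
    rw [integral_congr_ae (.of_forall this)]
    simp
  · have hs0 : 0 < ‖y‖ := norm_pos_iff.mpr hy0
    have hsmem : ‖y‖ ∈ Metric.ball (0:ℝ) ε ∩ Set.Ioi 0 := by
      constructor
      · rw [Metric.mem_ball, Real.dist_eq, sub_zero, abs_of_pos hs0]
        linarith
      · exact hs0
    have h1 : K / 2 < ∫ x, φ x * ((ψ (x + ‖y‖ • e₁) - ψ x) / ‖y‖) := hball hsmem
    have hIdiv : ∫ x, φ x * ((ψ (x + ‖y‖ • e₁) - ψ x) / ‖y‖)
        = (∫ x, φ x * (ψ (x + ‖y‖ • e₁) - ψ x)) / ‖y‖ := by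
      rw [← integral_div]
      exact integral_congr_ae (.of_forall fun x => by ring)
    rw [hIdiv, lt_div_iff₀ hs0] at h1
    -- h1 : K / 2 * ‖y‖ < ∫ x, φ x * (ψ (x + ‖y‖ • e₁) - ψ x)
    have he1 : ‖(‖y‖⁻¹ • y : EuclideanSpace ℝ (Fin 3))‖ = 1 := by
      rw [norm_smul, norm_inv, norm_norm, inv_mul_cancel₀ (ne_of_gt hs0)]
    have h2 : ∫ x, (φ (x - y) - φ x) * ge (‖y‖⁻¹ • y) x
        = ∫ x, φ x * (ψ (x + ‖y‖ • e₁) - ψ x) := by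
      rw [translate_eq hL1 he1 y, rotate_eq hradial hy0]
    have hf2 : MemLp (fun x : EuclideanSpace ℝ (Fin 3) => φ (x - y) - φ x) 2 volume := by
      have h := hL2.comp_measurePreserving (measurePreserving_sub_right volume y)
      exact h.sub hL2
    have hcs := cauchy_schwarz _ _ hf2 (memLp_ge _ he1)
    have hge2 : ∫ x, ge (‖y‖⁻¹ • y) x ^ 2 ≤ M :=
      integral_mono (memLp_ge _ he1).integrable_sq integrable_m
        (fun x => sq_ge_le_m _ he1 x)
    have hInn : 0 ≤ ∫ x, (φ (x - y) - φ x) ^ 2 :=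
      integral_nonneg fun x => sq_nonneg _
    have hd0 : 0 ≤ K / 2 * ‖y‖ := by positivity
    have hsq : (K / 2 * ‖y‖) ^ 2 ≤ (∫ x, (φ (x - y) - φ x) * ge (‖y‖⁻¹ • y) x) ^ 2 := by
      rw [h2]
      have := le_of_lt h1
      nlinarith
    have hcs2 : (∫ x, (φ (x - y) - φ x) * ge (‖y‖⁻¹ • y) x) ^ 2
        ≤ (∫ x, (φ (x - y) - φ x) ^ 2) * M := by
      calc (∫ x, (φ (x - y) - φ x) * ge (‖y‖⁻¹ • y) x) ^ 2
          ≤ (∫ x, (φ (x - y) - φ x) ^ 2) * ∫ x, ge (‖y‖⁻¹ • y) x ^ 2 := hcs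
        _ ≤ (∫ x, (φ (x - y) - φ x) ^ 2) * M :=
            mul_le_mul_of_nonneg_left hge2 hInn
    have hgoal_eq : ∫ x, (φ x - φ (x - y)) ^ 2 = ∫ x, (φ (x - y) - φ x) ^ 2 :=
      integral_congr_ae (.of_forall fun x => by ring)
    rw [hgoal_eq, div_mul_eq_mul_div, div_le_iff₀ (by positivity : (0:ℝ) < 8 * M)]
    nlinarith [hsq, hcs2, hs0, hM]
end
end
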